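/- Jacobi–Maupertuis principle (forward direction, Euclidean coordinates): let V : ℝⁿ → ℝ be twice continuously differentiable, let γ : ℝ → ℝⁿ satisfy Newton's equation γ''(t) = −∇V(γ(t)), and let E = (1/2)‖γ'(0)‖² + V(γ(0)). Assume V(γ(t)) < E and γ'(t) ≠ 0 for all t. Define the conformal factor f(p) = 2(E − V(p)) and reparametrize γ by the new parameter s with ds/dt = f(γ(t)); i.e., let σ(s) = γ(t(s)) where t(s) is the inverse of s(t) = ∫₀ᵗ f(γ(τ)) dτ. Then σ satisfies the geodesic equation of the Riemannian metric G = f·⟨·,·⟩ on the region {V < E}: σ''(s) + (1/f(σ))⟨∇f(σ), σ'(s)⟩·σ'(s) − (1/(2 f(σ)))·‖σ'(s)‖²·∇f(σ) = 0 for all s, where ∇f = −2∇V. In particular, the trajectories in configuration space of the natural system with potential V and energy E coincide, up to reparametrization, with geodesics of the Jacobi metric G = 2(E − V)·⟨·,·⟩. -/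

import Mathlib

/-!
Newton's equation says `γ'' = ∇f / 2` and energy conservation says `‖γ'‖² = f(γ)`.  With
`dt/ds = 1/f` the chain rule gives `σ' = γ'/f` and `σ'' = (γ''/f − ⟨∇f, γ'⟩ γ'/f²)/f`; the two
correction terms of the geodesic equation are `⟨∇f, γ'⟩ γ'/f³` and `‖γ'‖² ∇f/(2f³) = ∇f/(2f²)`,
which cancel the two parts of `σ''` exactly.
-/

open InnerProductSpace
open scoped Gradient

theorem hasDerivAt_of_rightInverse {φ φ' ψ : ℝ → ℝ} (hφ : ∀ t, HasDerivAt φ (φ' t) t)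
    (hφ' : ∀ t, 0 < φ' t) (hψ : Function.RightInverse ψ φ) (s : ℝ) :
    HasDerivAt ψ (φ' (ψ s))⁻¹ s := by
  have hψ_cont : Continuous ψ :=
    ((strictMono_of_hasDerivAt_pos hφ hφ').orderIsoOfRightInverse φ ψ hψ).symm.continuous
  exact (hφ (ψ s)).of_local_left_inverse hψ_cont.continuousAt (hφ' _).ne' (.of_forall hψ)

section

variable {F : Type*} [NormedAddCommGroup F] [InnerProductSpace ℝ F]

theorem conformal_geodesic_identity (a v : F) {c : ℝ} (hc : c ≠ 0) (hv : ‖v‖ ^ 2 = c) :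
    c⁻¹ • (c⁻¹ • (2 : ℝ)⁻¹ • a + (-⟪a, v⟫_ℝ / c ^ 2) • v)
      + (⟪a, c⁻¹ • v⟫_ℝ / c) • c⁻¹ • v - (‖c⁻¹ • v‖ ^ 2 / (2 * c)) • a = 0 := by
  rw [norm_smul, mul_pow, norm_inv, Real.norm_eq_abs, inv_pow, sq_abs, hv, real_inner_smul_right]
  match_scalars <;> field_simp <;> ring

variable [CompleteSpace F] {V : F → ℝ} {g p : F}

theorem HasGradientAt.const_sub (hV : HasGradientAt V g p) (E : ℝ) :
    HasGradientAt (fun p => E - V p) (-g) p := by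
  rw [hasGradientAt_iff_hasFDerivAt, map_neg]
  exact hV.hasFDerivAt.const_sub E

theorem HasGradientAt.const_mul (hV : HasGradientAt V g p) (c : ℝ) :
    HasGradientAt (fun p => c * V p) (c • g) p := by
  rw [hasGradientAt_iff_hasFDerivAt, map_smulₛₗ]
  exact hV.hasFDerivAt.const_mul c

theorem HasGradientAt.comp_hasDerivAt {γ : ℝ → F} {v : F} {t : ℝ}
    (hV : HasGradientAt V g (γ t)) (hγ : HasDerivAt γ v t) :
    HasDerivAt (fun t => V (γ t)) ⟪g, v⟫_ℝ t :=
  hV.hasFDerivAt.comp_hasDerivAt t hγ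

theorem newton_energy_eq (hV : Differentiable ℝ V) {γ γ' γ'' : ℝ → F}
    (hγ : ∀ t, HasDerivAt γ (γ' t) t) (hγ' : ∀ t, HasDerivAt γ' (γ'' t) t)
    (hNewton : ∀ t, γ'' t = -∇ V (γ t)) (t : ℝ) :
    ‖γ' t‖ ^ 2 + 2 * V (γ t) = ‖γ' 0‖ ^ 2 + 2 * V (γ 0) := by
  have hderiv : ∀ t, HasDerivAt (fun t => ‖γ' t‖ ^ 2 + 2 * V (γ t)) 0 t := fun t => by
    refine ((hγ' t).norm_sq.add
      (((hV (γ t)).hasGradientAt.comp_hasDerivAt (hγ t)).const_mul 2)).congr_deriv ?_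
    rw [hNewton, inner_neg_right, real_inner_comm]
    ring
  exact is_const_of_deriv_eq_zero (fun t => (hderiv t).differentiableAt)
    (fun t => (hderiv t).deriv) t 0

theorem conformal_geodesic_of_reparam {f : F → ℝ} {γ γ' γ'' : ℝ → F} {τ : ℝ → ℝ}
    (hf : ∀ t, DifferentiableAt ℝ f (γ t))
    (hγ : ∀ t, HasDerivAt γ (γ' t) t) (hγ' : ∀ t, HasDerivAt γ' (γ'' t) t)
    (hacc : ∀ t, γ'' t = (2 : ℝ)⁻¹ • ∇ f (γ t))
    (henergy : ∀ t, ‖γ' t‖ ^ 2 = f (γ t)) (hf₀ : ∀ t, f (γ t) ≠ 0)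
    (hτ : ∀ s, HasDerivAt τ (f (γ (τ s)))⁻¹ s) :
    ∃ σ' σ'' : ℝ → F,
      (∀ s, HasDerivAt (fun s => γ (τ s)) (σ' s) s) ∧
      (∀ s, HasDerivAt σ' (σ'' s) s) ∧
      (∀ s, σ'' s
        + (⟪∇ f (γ (τ s)), σ' s⟫_ℝ / f (γ (τ s))) • σ' s
        - (‖σ' s‖ ^ 2 / (2 * f (γ (τ s)))) • ∇ f (γ (τ s)) = 0) := by
  set g : ℝ → ℝ := fun t => f (γ t)
  set g' : ℝ → ℝ := fun t => ⟪∇ f (γ t), γ' t⟫_ℝ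
  have hg : ∀ t, HasDerivAt g (g' t) t := fun t =>
    (hf t).hasGradientAt.comp_hasDerivAt (hγ t)
  have hvel : ∀ t, HasDerivAt (fun t => (g t)⁻¹ • γ' t)
      ((g t)⁻¹ • γ'' t + (-g' t / g t ^ 2) • γ' t) t := fun t =>
    ((hg t).inv (hf₀ t)).smul (hγ' t)
  refine ⟨fun s => (g (τ s))⁻¹ • γ' (τ s),
    fun s => (g (τ s))⁻¹ • ((g (τ s))⁻¹ • γ'' (τ s) + (-g' (τ s) / g (τ s) ^ 2) • γ' (τ s)),
    fun s => (hγ (τ s)).scomp s (hτ s), fun s => (hvel (τ s)).scomp s (hτ s), fun s => ?_⟩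
  beta_reduce
  rw [hacc]
  exact conformal_geodesic_identity _ _ (hf₀ _) (henergy _)

end

theorem jacobi_maupertuis_forward_general
    (n : ℕ) (V : EuclideanSpace ℝ (Fin n) → ℝ)
    (hV : ContDiff ℝ 2 V)
    (γ γ' γ'' : ℝ → EuclideanSpace ℝ (Fin n))
    (hγ : ∀ t, HasDerivAt γ (γ' t) t)
    (hγ' : ∀ t, HasDerivAt γ' (γ'' t) t)
    (hNewton : ∀ t, γ'' t = - gradient V (γ t))
    (E : ℝ) (hE : E = (1 / 2) * ‖γ' 0‖ ^ 2 + V (γ 0))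
    (hbound : ∀ t, V (γ t) < E)
    (f : EuclideanSpace ℝ (Fin n) → ℝ) (hf : f = fun p => 2 * (E - V p))
    (sOf : ℝ → ℝ) (hsOf : sOf = fun t => ∫ τ in (0:ℝ)..t, f (γ τ))
    (timeOf : ℝ → ℝ)
    (hinv₂ : ∀ s, sOf (timeOf s) = s)
    (σ : ℝ → EuclideanSpace ℝ (Fin n)) (hσ : σ = fun s => γ (timeOf s)) :
    ∃ σ' σ'' : ℝ → EuclideanSpace ℝ (Fin n),
      (∀ s, HasDerivAt σ (σ' s) s) ∧
      (∀ s, HasDerivAt σ' (σ'' s) s) ∧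
      (∀ s, σ'' s
        + ((inner ℝ (gradient f (σ s)) (σ' s) : ℝ) / f (σ s)) • σ' s
        - (‖σ' s‖ ^ 2 / (2 * f (σ s))) • gradient f (σ s) = 0) := by
  subst hf hsOf hσ
  have hVd : Differentiable ℝ V := hV.differentiable (by norm_num)
  have hgrad : ∀ p, HasGradientAt (fun p => 2 * (E - V p)) ((2 : ℝ) • -∇ V p) p := fun p =>
    ((hVd p).hasGradientAt.const_sub E).const_mul 2
  have hpos : ∀ t, 0 < 2 * (E - V (γ t)) := fun t => by linarith [hbound t]
  have hs : ∀ t, HasDerivAt (fun t => ∫ τ in (0:ℝ)..t, 2 * (E - V (γ τ)))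
      (2 * (E - V (γ t))) t := fun t => by
    have hγ_cont : Continuous γ := continuous_iff_continuousAt.2 fun t => (hγ t).continuousAt
    exact (by fun_prop : Continuous fun t => 2 * (E - V (γ t))).integral_hasStrictDerivAt 0 t
      |>.hasDerivAt
  refine conformal_geodesic_of_reparam (fun t => (hgrad _).differentiableAt) hγ hγ'
    (fun t => ?_) (fun t => ?_) (fun t => (hpos t).ne') (hasDerivAt_of_rightInverse hs hpos hinv₂)
  · rw [(hgrad _).gradient, hNewton, smul_smul]
    norm_num
  · linarith [newton_energy_eq hVd hγ hγ' hNewton t, hE]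

/-- Jacobi–Maupertuis principle (forward direction, Euclidean coordinates):
let `V` be C², let `γ` solve Newton's equation `γ'' = −∇V(γ)` with energy
`E = (1/2)‖γ'(0)‖² + V(γ(0))`, and assume `V(γ(t)) < E` and `γ'(t) ≠ 0` for
all `t`.  Set `f(p) = 2(E − V(p))` and reparametrize `γ` by the arc parameter
`s(t) = ∫₀ᵗ f(γ(τ)) dτ`, with inverse `t(s)` (`timeOf`), so `σ(s) = γ(t(s))`.
Then `σ` is twice differentiable and satisfies the geodesic equation of the
conformal (Jacobi) metric `G = f⟨·,·⟩`:
`σ'' + (1/f)⟨∇f, σ'⟩σ' − (1/(2f))‖σ'‖²∇f = 0`. -/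
theorem jacobi_maupertuis_forward
    (n : ℕ) (V : EuclideanSpace ℝ (Fin n) → ℝ)
    (hV : ContDiff ℝ 2 V)
    (γ γ' γ'' : ℝ → EuclideanSpace ℝ (Fin n))
    (hγ : ∀ t, HasDerivAt γ (γ' t) t)
    (hγ' : ∀ t, HasDerivAt γ' (γ'' t) t)
    (hNewton : ∀ t, γ'' t = - gradient V (γ t))
    (E : ℝ) (hE : E = (1 / 2) * ‖γ' 0‖ ^ 2 + V (γ 0))
    (hbound : ∀ t, V (γ t) < E)
    (hne : ∀ t, γ' t ≠ 0)
    (f : EuclideanSpace ℝ (Fin n) → ℝ) (hf : f = fun p => 2 * (E - V p))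
    (sOf : ℝ → ℝ) (hsOf : sOf = fun t => ∫ τ in (0:ℝ)..t, f (γ τ))
    (timeOf : ℝ → ℝ)
    (hinv₁ : ∀ t, timeOf (sOf t) = t)
    (hinv₂ : ∀ s, sOf (timeOf s) = s)
    (σ : ℝ → EuclideanSpace ℝ (Fin n)) (hσ : σ = fun s => γ (timeOf s)) :
    ∃ σ' σ'' : ℝ → EuclideanSpace ℝ (Fin n),
      (∀ s, HasDerivAt σ (σ' s) s) ∧
      (∀ s, HasDerivAt σ' (σ'' s) s) ∧
      (∀ s, σ'' s
        + ((inner ℝ (gradient f (σ s)) (σ' s) : ℝ) / f (σ s)) • σ' s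
        - (‖σ' s‖ ^ 2 / (2 * f (σ s))) • gradient f (σ s) = 0) :=
  jacobi_maupertuis_forward_general n V hV γ γ' γ'' hγ hγ' hNewton E hE hbound f hf sOf hsOf timeOf
    hinv₂ σ hσ
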